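/- arXiv:2511.14785 — 3 statements merged into one kernel-verified Lean document; each statement's English description precedes it below -/
import Mathlib

section
/- The rotation symmetry group of the rhombicuboctahedron has order 24: the set of matrices A in SO(3) (real 3×3 orthogonal matrices with determinant 1) satisfying A(V) = V (i.e., the image of the set V under the linear map A equals V) has exactly 24 elements. -/
noncomputable def base : Fin 3 → ℝ := ![1, 1, 1 + Real.sqrt 2]

/-- The vertex set of the rhombicuboctahedron with edge length 2 centered at the origin:
all points whose coordinates are, in some order, `±1, ±1, ±(1 + √2)`
(all coordinate permutations combined with all choices of signs). -/
def V : Set (EuclideanSpace ℝ (Fin 3)) :=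
  {v | ∃ σ : Equiv.Perm (Fin 3), ∃ ε : Fin 3 → ℝ,
    (∀ i, ε i = 1 ∨ ε i = -1) ∧ ∀ i, v i = ε i * base (σ i)}

/-- The action of a 3×3 real matrix on ℝ³ (as `EuclideanSpace ℝ (Fin 3)`). -/
def act (A : Matrix (Fin 3) (Fin 3) ℝ) (v : EuclideanSpace ℝ (Fin 3)) :
    EuclideanSpace ℝ (Fin 3) := WithLp.toLp 2 (A.mulVec v)

/-!
If `A ∈ O(3)` maps `V` onto `V`, then so does `Aᵀ = A⁻¹`, hence every column `a` of `A` has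
inner product in `{±1, ±(1 + √2)}` with every vertex. Two vertices differing only in the sign of
a short coordinate `j` show that `2 a_j` is a difference of two such values; with `‖a‖ = 1` this
forces `a_j² ∈ {0, 1/2, 1}`. The pattern `(1/2, 1/2, 0)` is impossible: for two such vertices with
long coordinate where `a` vanishes, the two (nonzero) inner products multiply to `a_i² - a_j² = 0`.
So `A` is a signed permutation matrix; conversely all 48 of these preserve `V`, and 24 have determinant 1.
-/

open Equiv Matrix Real

lemma units_cast_eq_one_or {R : Type*} [Ring R] (u : ℤˣ) :
    ((u : ℤ) : R) = 1 ∨ ((u : ℤ) : R) = -1 := by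
  rcases Int.units_eq_one_or u with rfl | rfl <;> simp

section SignedPermMatrix

variable {n R : Type*} [Fintype n] [DecidableEq n] [CommRing R]

def signedPermMatrix (σ : Perm n) (ε : n → ℤˣ) : Matrix n n R :=
  diagonal (fun i => ((ε i : ℤ) : R)) * σ.permMatrix R

lemma signedPermMatrix_apply (σ : Perm n) (ε : n → ℤˣ) (i j : n) :
    (signedPermMatrix σ ε : Matrix n n R) i j = if σ i = j then ((ε i : ℤ) : R) else 0 := by
  simp [signedPermMatrix, PEquiv.toMatrix_apply, toPEquiv_apply]

lemma signedPermMatrix_mulVec (σ : Perm n) (ε : n → ℤˣ) (v : n → R) (i : n) :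
    (signedPermMatrix σ ε *ᵥ v) i = ((ε i : ℤ) : R) * v (σ i) := by
  rw [signedPermMatrix, ← mulVec_mulVec, mulVec_diagonal, permMatrix_mulVec, Function.comp_apply]

lemma det_signedPermMatrix (σ : Perm n) (ε : n → ℤˣ) :
    (signedPermMatrix σ ε : Matrix n n R).det = ((Perm.sign σ * ∏ i, ε i : ℤˣ) : ℤ) := by
  simp [signedPermMatrix, det_diagonal, mul_comm]

lemma det_signedPermMatrix_eq_one_iff [CharZero R] {σ : Perm n} {ε : n → ℤˣ} :
    (signedPermMatrix σ ε : Matrix n n R).det = 1 ↔ Perm.sign σ * ∏ i, ε i = 1 := by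
  rw [det_signedPermMatrix, Int.cast_eq_one, Units.val_eq_one]

lemma signedPermMatrix_mem_orthogonalGroup (σ : Perm n) (ε : n → ℤˣ) :
    (signedPermMatrix σ ε : Matrix n n R) ∈ orthogonalGroup n R := by
  have hε : diagonal (fun i => ((ε i : ℤ) : R)) * diagonal (fun i => ((ε i : ℤ) : R)) = 1 := by
    rw [diagonal_mul_diagonal, ← diagonal_one]
    congr 1
    ext i
    rw [← Int.cast_mul, ← Units.val_mul, Int.units_mul_self, Units.val_one, Int.cast_one]
  rw [mem_orthogonalGroup_iff', signedPermMatrix, transpose_mul, diagonal_transpose,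
    transpose_permMatrix, Matrix.mul_assoc, ← Matrix.mul_assoc (diagonal _), hε,
    Matrix.one_mul, ← permMatrix_mul, mul_inv_cancel, permMatrix_one]

lemma signedPermMatrix_injective [CharZero R] :
    Function.Injective (fun p : Perm n × (n → ℤˣ) => (signedPermMatrix p.1 p.2 : Matrix n n R)) := by
  rintro ⟨σ, ε⟩ ⟨τ, δ⟩ h
  have key : ∀ i, σ i = τ i ∧ ε i = δ i := by
    intro i
    have hi : (signedPermMatrix σ ε : Matrix n n R) i (σ i) = signedPermMatrix τ δ i (σ i) :=
      congrFun (congrFun h i) (σ i)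
    rw [signedPermMatrix_apply, signedPermMatrix_apply, if_pos rfl] at hi
    split_ifs at hi with hτ
    · exact ⟨hτ.symm, by exact_mod_cast hi⟩
    · exact absurd hi (by simp)
  simp only [Prod.mk.injEq]
  exact ⟨Equiv.ext fun i => (key i).1, funext fun i => (key i).2⟩

lemma exists_eq_signedPermMatrix [IsDomain R] {A : Matrix n n R}
    (hA : A ∈ orthogonalGroup n R) (hcol : ∀ j, ∃ k, ∀ i ≠ k, A i j = 0) :
    ∃ σ ε, A = signedPermMatrix σ ε := by
  choose k hk using hcol
  have hAtA : Aᵀ * A = 1 := (mem_orthogonalGroup_iff' n R).mp hA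
  have hgram : ∀ j j', (Aᵀ * A) j j' = A (k j) j * A (k j) j' := fun j j' =>
    Finset.sum_eq_single (k j) (fun i _ hi => by simp [hk j i hi]) (by simp)
  have hunit : ∀ j, A (k j) j * A (k j) j = 1 := fun j => by
    rw [← hgram, hAtA, one_apply_eq]
  have hinj : Function.Injective k := by
    intro j j' hkj
    by_contra hne
    have h0 := hgram j j'
    rw [hAtA, one_apply_ne hne, hkj] at h0
    exact mul_ne_zero (right_ne_zero_of_mul_eq_one (hkj ▸ hunit j))
      (left_ne_zero_of_mul_eq_one (hunit j')) h0.symm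
  set σ := (Equiv.ofBijective k hinj.bijective_of_finite).symm
  have hσk : ∀ j, σ (k j) = j := (Equiv.ofBijective k _).symm_apply_apply
  have hkσ : ∀ i, k (σ i) = i := (Equiv.ofBijective k _).apply_symm_apply
  have hpm : ∀ i, A i (σ i) = 1 ∨ A i (σ i) = -1 := fun i =>
    mul_self_eq_one_iff.mp (by simpa only [hkσ] using hunit (σ i))
  classical
  refine ⟨σ, fun i => if A i (σ i) = 1 then 1 else -1, ?_⟩
  ext i j
  rw [signedPermMatrix_apply]
  split_ifs with hij h1
  · simp [← hij, h1]
  · simp [← hij, (hpm i).resolve_left h1]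
  · exact hk j i fun h => hij (h ▸ hσk j)

end SignedPermMatrix

lemma base_eq_one {k : Fin 3} (hk : k ≠ 2) : base k = 1 := by
  fin_cases k <;> simp_all [base]

def vertexCoords : Set ℝ := {1, -1, 1 + √2, -(1 + √2)}

lemma apply_mem_vertexCoords {v : EuclideanSpace ℝ (Fin 3)} (hv : v ∈ V) (i : Fin 3) :
    v i ∈ vertexCoords := by
  obtain ⟨σ, ε, hε, hv⟩ := hv
  rw [hv]
  generalize σ i = k
  fin_cases k <;> rcases hε i with h | h <;> simp [h, base, vertexCoords]

lemma ofLp_act (A : Matrix (Fin 3) (Fin 3) ℝ) (v : EuclideanSpace ℝ (Fin 3)) :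
    (act A v).ofLp = A *ᵥ v.ofLp := rfl

lemma act_signedPermMatrix_mem_V (σ : Perm (Fin 3)) (ε : Fin 3 → ℤˣ)
    {v : EuclideanSpace ℝ (Fin 3)} (hv : v ∈ V) : act (signedPermMatrix σ ε) v ∈ V := by
  obtain ⟨τ, δ, hδ, hv⟩ := hv
  refine ⟨τ * σ, fun i => ((ε i : ℤ) : ℝ) * δ (σ i), fun i => ?_, fun i => ?_⟩
  · rcases units_cast_eq_one_or (R := ℝ) (ε i) with h | h <;> rcases hδ (σ i) with h' | h' <;>
      simp [h, h']
  · rw [ofLp_act, signedPermMatrix_mulVec, hv, Perm.mul_apply, mul_assoc]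

lemma image_act_signedPermMatrix (σ : Perm (Fin 3)) (ε : Fin 3 → ℤˣ) :
    act (signedPermMatrix σ ε) '' V = V := by
  refine subset_antisymm (Set.image_subset_iff.mpr fun v hv => act_signedPermMatrix_mem_V σ ε hv)
    fun w hw => ⟨_, act_signedPermMatrix_mem_V σ.symm (fun i => ε (σ.symm i)) hw, ?_⟩
  ext i
  rw [ofLp_act, signedPermMatrix_mulVec, ofLp_act, signedPermMatrix_mulVec,
    σ.symm_apply_apply, ← mul_assoc, ← Int.cast_mul, ← Units.val_mul, Int.units_mul_self,
    Units.val_one, Int.cast_one, one_mul]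

noncomputable def longVertex (k j : Fin 3) (t : ℝ) : EuclideanSpace ℝ (Fin 3) :=
  WithLp.toLp 2 fun l => if l = k then 1 + √2 else if l = j then t else 1

lemma longVertex_mem_V (k j : Fin 3) {t : ℝ} (ht : t = 1 ∨ t = -1) : longVertex k j t ∈ V := by
  refine ⟨swap k 2, fun l => if l = k then 1 else if l = j then t else 1,
    fun l => ?_, fun l => ?_⟩
  · dsimp only
    split_ifs <;> simp [ht]
  · by_cases hl : l = k
    · simp [longVertex, hl, base]
    · have : swap k 2 l ≠ 2 := by rwa [Ne, swap_apply_eq_iff, swap_apply_right]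
      simp [longVertex, hl, base_eq_one this]

lemma longVertex_dotProduct {i j k : Fin 3} (hij : i ≠ j) (hik : i ≠ k) (hjk : j ≠ k) (t : ℝ)
    (x : Fin 3 → ℝ) : (longVertex k j t).ofLp ⬝ᵥ x = (1 + √2) * x k + t * x j + x i := by
  fin_cases i <;> fin_cases j <;> fin_cases k <;>
    simp_all [longVertex, dotProduct, Fin.sum_univ_three] <;> ring

lemma sq_half_sub_of_mem_vertexCoords {p q : ℝ} (hp : p ∈ vertexCoords) (hq : q ∈ vertexCoords)
    (h : ((p - q) / 2) ^ 2 ≤ 1) :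
    ((p - q) / 2) ^ 2 = 0 ∨ ((p - q) / 2) ^ 2 = 1 / 2 ∨ ((p - q) / 2) ^ 2 = 1 := by
  have hs : √2 ^ 2 = 2 := sq_sqrt zero_le_two
  have hpos : 0 < √2 := by positivity
  simp only [vertexCoords, Set.mem_insert_iff, Set.mem_singleton_iff] at hp hq
  rcases hp with rfl | rfl | rfl | rfl <;> rcases hq with rfl | rfl | rfl | rfl <;> ring_nf at h ⊢ <;>
    (try simp only [hs] at h ⊢) <;> first | (exfalso; linarith) | norm_num

lemma ne_zero_of_mem_vertexCoords {p : ℝ} (hp : p ∈ vertexCoords) : p ≠ 0 := by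
  have hpos : 0 < √2 := by positivity
  simp only [vertexCoords, Set.mem_insert_iff, Set.mem_singleton_iff] at hp
  rcases hp with rfl | rfl | rfl | rfl <;> intro h <;> linarith

lemma exists_forall_ne_eq_zero_of_sq_mem (x : Fin 3 → ℝ) (hsum : ∑ i, x i ^ 2 = 1)
    (hsq : ∀ i, x i ^ 2 = 0 ∨ x i ^ 2 = 1 / 2 ∨ x i ^ 2 = 1)
    (hne : ∀ i j k, i ≠ j → i ≠ k → j ≠ k → x k = 0 → x i ^ 2 ≠ x j ^ 2) :
    ∃ k, ∀ i ≠ k, x i = 0 := by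
  have hz : ∀ {i}, x i ^ 2 = 0 → x i = 0 := (pow_eq_zero_iff two_ne_zero).mp
  rw [Fin.sum_univ_three] at hsum
  rcases hsq 0 with h0 | h0 | h0 <;> rcases hsq 1 with h1 | h1 | h1 <;>
    rcases hsq 2 with h2 | h2 | h2 <;> rw [h0, h1, h2] at hsum <;> norm_num at hsum
  · exact ⟨2, fun i hi => by fin_cases i <;> simp_all⟩
  · exact absurd (h1.trans h2.symm) (hne 1 2 0 (by decide) (by decide) (by decide) (hz h0))
  · exact ⟨1, fun i hi => by fin_cases i <;> simp_all⟩
  · exact absurd (h0.trans h2.symm) (hne 0 2 1 (by decide) (by decide) (by decide) (hz h1))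
  · exact absurd (h0.trans h1.symm) (hne 0 1 2 (by decide) (by decide) (by decide) (hz h2))
  · exact ⟨0, fun i hi => by fin_cases i <;> simp_all⟩

lemma exists_forall_ne_eq_zero_of_dotProduct_mem (x : Fin 3 → ℝ) (hx : ∑ i, x i ^ 2 = 1)
    (h : ∀ u ∈ V, u.ofLp ⬝ᵥ x ∈ vertexCoords) : ∃ k, ∀ i ≠ k, x i = 0 := by
  have hpair : ∀ {i j k : Fin 3}, i ≠ j → i ≠ k → j ≠ k →
      (longVertex k j 1).ofLp ⬝ᵥ x ∈ vertexCoords ∧ (longVertex k j (-1)).ofLp ⬝ᵥ x ∈ vertexCoords :=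
    fun _ _ _ => ⟨h _ (longVertex_mem_V _ _ (.inl rfl)), h _ (longVertex_mem_V _ _ (.inr rfl))⟩
  refine exists_forall_ne_eq_zero_of_sq_mem x hx (fun j => ?_) ?_
  · obtain ⟨i, k, hij, hik, hjk⟩ : ∃ i k : Fin 3, i ≠ j ∧ i ≠ k ∧ j ≠ k := by
      fin_cases j <;> decide
    have hxj : x j ^ 2 ≤ 1 := hx ▸ Finset.single_le_sum (fun i _ => sq_nonneg (x i))
      (Finset.mem_univ j)
    have hdiff := sq_half_sub_of_mem_vertexCoords (hpair hij hik hjk).1 (hpair hij hik hjk).2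
    rw [longVertex_dotProduct hij hik hjk, longVertex_dotProduct hij hik hjk] at hdiff
    ring_nf at hdiff hxj ⊢
    exact hdiff hxj
  · intro i j k hij hik hjk hk hsq
    have hprod := mul_ne_zero (ne_zero_of_mem_vertexCoords (hpair hij hik hjk).1)
      (ne_zero_of_mem_vertexCoords (hpair hij hik hjk).2)
    rw [longVertex_dotProduct hij hik hjk, longVertex_dotProduct hij hik hjk, hk] at hprod
    exact hprod (by linear_combination hsq)

lemma act_transpose_mem_V {A : Matrix (Fin 3) (Fin 3) ℝ} (hA : A ∈ orthogonalGroup (Fin 3) ℝ)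
    (himg : act A '' V = V) {u : EuclideanSpace ℝ (Fin 3)} (hu : u ∈ V) : act Aᵀ u ∈ V := by
  rw [← himg] at hu
  obtain ⟨w, hw, rfl⟩ := hu
  have : act Aᵀ (act A w) = w := by
    ext i
    rw [ofLp_act, ofLp_act, mulVec_mulVec, (mem_orthogonalGroup_iff' _ _).mp hA, one_mulVec]
  rwa [this]

lemma exists_column_support {A : Matrix (Fin 3) (Fin 3) ℝ} (hA : A ∈ orthogonalGroup (Fin 3) ℝ)
    (himg : act A '' V = V) (j : Fin 3) : ∃ k, ∀ i ≠ k, A i j = 0 := by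
  refine exists_forall_ne_eq_zero_of_dotProduct_mem (fun i => A i j) ?_ fun u hu => ?_
  · have := congrFun (congrFun ((mem_orthogonalGroup_iff' _ _).mp hA) j) j
    simpa [mul_apply, sq] using this
  · have := apply_mem_vertexCoords (act_transpose_mem_V hA himg hu) j
    rwa [ofLp_act, mulVec_transpose] at this

/-- The rotation symmetry group of the rhombicuboctahedron has order 24:
there are exactly 24 matrices `A` in SO(3) with `A(V) = V`. -/
theorem rhombicuboctahedron_rotation_group_card :
    {A : Matrix (Fin 3) (Fin 3) ℝ | A ∈ Matrix.orthogonalGroup (Fin 3) ℝ ∧ A.det = 1 ∧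
      act A '' V = V}.ncard = 24 := by
  calc _ = ((fun p : Perm (Fin 3) × (Fin 3 → ℤˣ) => signedPermMatrix p.1 p.2) ''
        {p | Perm.sign p.1 * ∏ i, p.2 i = 1}).ncard := by
        congr 1
        ext A
        constructor
        · rintro ⟨hA, hdet, himg⟩
          obtain ⟨σ, ε, rfl⟩ := exists_eq_signedPermMatrix hA (exists_column_support hA himg)
          exact ⟨(σ, ε), det_signedPermMatrix_eq_one_iff.mp hdet, rfl⟩
        · rintro ⟨⟨σ, ε⟩, hsign, rfl⟩
          exact ⟨signedPermMatrix_mem_orthogonalGroup σ ε,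
            det_signedPermMatrix_eq_one_iff.mpr hsign, image_act_signedPermMatrix σ ε⟩
    _ = 24 := by
      rw [Set.ncard_image_of_injective _ signedPermMatrix_injective,
        Set.ncard_eq_toFinset_card', Set.toFinset_ofPred]
      decide
end

section
/- The rotation symmetry group of the rhombicuboctahedron is isomorphic to the symmetric group on 4 letters: the subgroup of SO(3) consisting of all A with A(V) = V (the stabilizer of the set V under the action of SO(3) on subsets of ℝ³) is isomorphic as a group to Equiv.Perm (Fin 4). -/
lemma act_one : act (1 : Matrix (Fin 3) (Fin 3) ℝ) = id := by
  funext v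
  show WithLp.toLp 2 ((1 : Matrix (Fin 3) (Fin 3) ℝ).mulVec v) = v
  simp

lemma act_mul (A B : Matrix (Fin 3) (Fin 3) ℝ) : act (A * B) = act A ∘ act B := by
  funext v
  show WithLp.toLp 2 ((A * B).mulVec v) = WithLp.toLp 2 (A.mulVec (B.mulVec v))
  rw [Matrix.mulVec_mulVec]

/-- The rotation symmetry group of the set `S ⊆ ℝ³`: the subgroup of the orthogonal
group O(3) consisting of the matrices with determinant 1 mapping `S` onto itself,
i.e. the stabilizer of the set `S` inside SO(3). -/
def rotGroup (S : Set (EuclideanSpace ℝ (Fin 3))) :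
    Subgroup (Matrix.orthogonalGroup (Fin 3) ℝ) where
  carrier := {A | ((A : Matrix (Fin 3) (Fin 3) ℝ)).det = 1 ∧
      act (A : Matrix (Fin 3) (Fin 3) ℝ) '' S = S}
  one_mem' := by
    refine ⟨by simp, ?_⟩
    rw [show ((1 : Matrix.orthogonalGroup (Fin 3) ℝ) : Matrix (Fin 3) (Fin 3) ℝ) = 1 from rfl,
      act_one, Set.image_id]
  mul_mem' := by
    rintro a b ⟨ha1, ha2⟩ ⟨hb1, hb2⟩
    refine ⟨?_, ?_⟩
    · rw [show ((a * b : Matrix.orthogonalGroup (Fin 3) ℝ) : Matrix (Fin 3) (Fin 3) ℝ)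
        = (a : Matrix (Fin 3) (Fin 3) ℝ) * (b : Matrix (Fin 3) (Fin 3) ℝ) from rfl,
        Matrix.det_mul, ha1, hb1, mul_one]
    · rw [show ((a * b : Matrix.orthogonalGroup (Fin 3) ℝ) : Matrix (Fin 3) (Fin 3) ℝ)
        = (a : Matrix (Fin 3) (Fin 3) ℝ) * (b : Matrix (Fin 3) (Fin 3) ℝ) from rfl,
        act_mul, Set.image_comp, hb2, ha2]
  inv_mem' := by
    rintro a ⟨ha1, ha2⟩
    have hinv : ((a⁻¹ : Matrix.orthogonalGroup (Fin 3) ℝ) : Matrix (Fin 3) (Fin 3) ℝ)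
        = star (a : Matrix (Fin 3) (Fin 3) ℝ) := rfl
    refine ⟨?_, ?_⟩
    · rw [hinv, Matrix.star_eq_conjTranspose, Matrix.det_conjTranspose, ha1, star_one]
    · have h1 : act ((a⁻¹ : Matrix.orthogonalGroup (Fin 3) ℝ) : Matrix (Fin 3) (Fin 3) ℝ) ∘
          act ((a : Matrix.orthogonalGroup (Fin 3) ℝ) : Matrix (Fin 3) (Fin 3) ℝ) = id := by
        rw [← act_mul, show ((a⁻¹ : Matrix.orthogonalGroup (Fin 3) ℝ) : Matrix (Fin 3) (Fin 3) ℝ) *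
          (a : Matrix (Fin 3) (Fin 3) ℝ) = ((a⁻¹ * a : Matrix.orthogonalGroup (Fin 3) ℝ) :
            Matrix (Fin 3) (Fin 3) ℝ) from rfl, inv_mul_cancel]
        exact act_one
      calc act (↑a⁻¹) '' S = act (↑a⁻¹) '' (act ↑a '' S) := by rw [ha2]
        _ = (act (↑a⁻¹) ∘ act ↑a) '' S := by rw [Set.image_comp]
        _ = S := by rw [h1, Set.image_id]

open Matrix

/-!
A rotation `A` with `A(V) = V` preserves dot products, so it maps the triangular face
`(1, 1, a), (1, a, 1), (a, 1, 1)` (`a = 1 + √2`) to three vertices that are pairwise joined by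
edges. Every vertex is a signed permutation of `(1, 1, a)`, and an exhaustive check over `ℤ[√2]`
shows that any such triple is the image of that face under a signed permutation matrix `P`.
The face spans `ℝ³`, so `A = P`. Hence the rotation group of `V` is the group of signed
permutation matrices of determinant `1` (the rotation group of the cube), and this group acts
on the four body diagonals of the cube as their full symmetric group.
-/

@[ext]
structure SignedPerm (ι : Type*) where
  perm : Equiv.Perm ι
  sign : ι → ℤˣ

namespace SignedPerm

variable {ι : Type*}

def equivProd : SignedPerm ι ≃ Equiv.Perm ι × (ι → ℤˣ) where
  toFun g := (g.perm, g.sign)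
  invFun p := ⟨p.1, p.2⟩

instance [DecidableEq ι] [Fintype ι] : DecidableEq (SignedPerm ι) := equivProd.decidableEq

instance [DecidableEq ι] [Fintype ι] : Fintype (SignedPerm ι) := .ofEquiv _ equivProd.symm

instance : Mul (SignedPerm ι) :=
  ⟨fun g h => ⟨g.perm * h.perm, fun k => g.sign (h.perm k) * h.sign k⟩⟩

instance : One (SignedPerm ι) := ⟨⟨1, 1⟩⟩

instance : Inv (SignedPerm ι) := ⟨fun g => ⟨g.perm⁻¹, fun k => (g.sign (g.perm⁻¹ k))⁻¹⟩⟩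

@[simp] lemma mul_perm (g h : SignedPerm ι) : (g * h).perm = g.perm * h.perm := rfl

@[simp] lemma mul_sign (g h : SignedPerm ι) (k : ι) :
    (g * h).sign k = g.sign (h.perm k) * h.sign k := rfl

@[simp] lemma one_perm : (1 : SignedPerm ι).perm = 1 := rfl

@[simp] lemma one_sign (k : ι) : (1 : SignedPerm ι).sign k = 1 := rfl

@[simp] lemma inv_perm (g : SignedPerm ι) : g⁻¹.perm = g.perm⁻¹ := rfl

@[simp] lemma inv_sign (g : SignedPerm ι) (k : ι) : g⁻¹.sign k = (g.sign (g.perm⁻¹ k))⁻¹ := rfl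

instance : Group (SignedPerm ι) where
  mul_assoc a b c := by ext <;> simp [mul_assoc]
  one_mul a := by ext <;> simp
  mul_one a := by ext <;> simp
  inv_mul_cancel a := by ext <;> simp

section Action

variable {M : Type*} [MulAction ℤˣ M]

instance : SMul (SignedPerm ι) (ι → M) := ⟨fun g x j => g.sign (g.perm⁻¹ j) • x (g.perm⁻¹ j)⟩

protected lemma smul_apply (g : SignedPerm ι) (x : ι → M) (j : ι) :
    (g • x) j = g.sign (g.perm⁻¹ j) • x (g.perm⁻¹ j) := rfl

instance : MulAction (SignedPerm ι) (ι → M) where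
  one_smul x := by funext j; simp [SignedPerm.smul_apply]
  mul_smul g h x := by funext j; simp [SignedPerm.smul_apply, mul_smul]

lemma smul_units_smul (g : SignedPerm ι) (c : ℤˣ) (x : ι → M) : g • (c • x) = c • (g • x) := by
  funext j
  simp only [SignedPerm.smul_apply, Pi.smul_apply, ← mul_smul, mul_comm]

end Action

section Ring

variable {R S : Type*} [CommRing R] [Ring S]

lemma dotProduct_smul_smul [Fintype ι] (g : SignedPerm ι) (x y : ι → R) :
    (g • x) ⬝ᵥ (g • y) = x ⬝ᵥ y := by
  simp only [dotProduct, SignedPerm.smul_apply, smul_mul_smul_comm, Int.units_mul_self, one_smul]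
  exact Equiv.sum_comp g.perm⁻¹ fun j => x j * y j

lemma comp_smul (f : R →+* S) (g : SignedPerm ι) (x : ι → R) : f ∘ (g • x) = g • (f ∘ x) := by
  funext j
  simp [SignedPerm.smul_apply, Units.smul_def]

variable [DecidableEq ι] [Fintype ι]

variable (R) in
def toMatrix (g : SignedPerm ι) : Matrix ι ι R :=
  (g.perm⁻¹).permMatrix R * diagonal fun k => ((g.sign k : ℤ) : R)

lemma toMatrix_mulVec (g : SignedPerm ι) (x : ι → R) : toMatrix R g *ᵥ x = g • x := by
  funext j
  simp [toMatrix, ← mulVec_mulVec, permMatrix_mulVec, mulVec_diagonal, SignedPerm.smul_apply,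
    Units.smul_def]

lemma toMatrix_apply (g : SignedPerm ι) (j k : ι) :
    toMatrix R g j k = if g.perm k = j then ((g.sign k : ℤ) : R) else 0 := by
  by_cases h : g.perm k = j
  · simp [toMatrix, PEquiv.toMatrix_apply, ← h]
  · simp [toMatrix, PEquiv.toMatrix_apply, h, Equiv.symm_apply_eq, Ne.symm h]

lemma toMatrix_one : toMatrix R (1 : SignedPerm ι) = 1 := by
  simp [ext_iff_mulVec, toMatrix_mulVec]

lemma toMatrix_mul (g h : SignedPerm ι) : toMatrix R (g * h) = toMatrix R g * toMatrix R h := by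
  simp [ext_iff_mulVec, ← mulVec_mulVec, toMatrix_mulVec, mul_smul]

lemma transpose_toMatrix (g : SignedPerm ι) : (toMatrix R g)ᵀ = toMatrix R g⁻¹ := by
  ext j k
  simp only [transpose_apply, toMatrix_apply, inv_perm, inv_sign, Int.units_inv_eq_self]
  by_cases h : g.perm j = k
  · simp [← h]
  · simp [h, Equiv.symm_apply_eq, Ne.symm h]

lemma toMatrix_mem_orthogonalGroup (g : SignedPerm ι) : toMatrix R g ∈ orthogonalGroup ι R := by
  rw [mem_orthogonalGroup_iff', transpose_toMatrix, ← toMatrix_mul, inv_mul_cancel, toMatrix_one]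

lemma toMatrix_injective [CharZero R] : Function.Injective (toMatrix R : SignedPerm ι → _) := by
  intro g h hgh
  have hperm (k : ι) : h.perm k = g.perm k := by
    have := congrFun₂ hgh (g.perm k) k
    simp only [toMatrix_apply] at this
    by_contra hne
    simp [hne] at this
  have hsign (k : ι) : g.sign k = h.sign k := by
    have := congrFun₂ hgh (g.perm k) k
    exact Units.ext (by simpa [toMatrix_apply, hperm] using this)
  exact SignedPerm.ext (Equiv.ext fun k => (hperm k).symm) (funext hsign)

def det : SignedPerm ι →* ℤˣ where
  toFun g := Equiv.Perm.sign g.perm * ∏ k, g.sign k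
  map_one' := by simp
  map_mul' g h := by
    simp only [mul_perm, mul_sign, map_mul, Finset.prod_mul_distrib, Equiv.prod_comp]
    exact mul_mul_mul_comm _ _ _ _

lemma det_toMatrix (g : SignedPerm ι) : (toMatrix R g).det = ((det g : ℤ) : R) := by
  simp [toMatrix, det]

variable (R) in
def toOrthogonal : SignedPerm ι →* orthogonalGroup ι R where
  toFun g := ⟨toMatrix R g, toMatrix_mem_orthogonalGroup g⟩
  map_one' := Subtype.ext toMatrix_one
  map_mul' g h := Subtype.ext (toMatrix_mul g h)

lemma toOrthogonal_injective [CharZero R] :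
    Function.Injective (toOrthogonal R : SignedPerm ι →* _) :=
  fun _ _ h => toMatrix_injective (congrArg Subtype.val h)

end Ring

end SignedPerm

open SignedPerm

def baseZ : Fin 3 → ℤ√2 := ![1, 1, ⟨1, 1⟩]

noncomputable def zsqrtTwoToReal : ℤ√2 →+* ℝ := Zsqrtd.toReal (by norm_num)

lemma zsqrtTwoToReal_injective : Function.Injective zsqrtTwoToReal :=
  Zsqrtd.toReal_injective _ fun n h => Int.sq_ne_two_mod_four n (h ▸ rfl)

lemma smul_base (g : SignedPerm (Fin 3)) : g • base = zsqrtTwoToReal ∘ (g • baseZ) := by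
  have hbase : zsqrtTwoToReal ∘ baseZ = base := by
    funext j
    fin_cases j <;> simp [baseZ, base, zsqrtTwoToReal]
  rw [comp_smul, hbase]

lemma smul_base_dotProduct_smul_base (g h : SignedPerm (Fin 3)) :
    g • base ⬝ᵥ h • base = zsqrtTwoToReal (g • baseZ ⬝ᵥ h • baseZ) := by
  rw [RingHom.map_dotProduct, smul_base, smul_base]

lemma V_eq_range : V = Set.range fun g : SignedPerm (Fin 3) => WithLp.toLp 2 (g • base) := by
  ext v
  constructor
  · rintro ⟨σ, ε, hε, hv⟩
    have hunit (i : Fin 3) : ∃ u : ℤˣ, ((u : ℤ) : ℝ) = ε i := by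
      rcases hε i with h | h
      · exact ⟨1, by simp [h]⟩
      · exact ⟨-1, by simp [h]⟩
    choose u hu using hunit
    refine ⟨⟨σ⁻¹, u ∘ ⇑σ⁻¹⟩, PiLp.ext fun i => ?_⟩
    simp [SignedPerm.smul_apply, Units.smul_def, hv, hu]
  · rintro ⟨g, rfl⟩
    refine ⟨g.perm⁻¹, fun i => ((g.sign (g.perm⁻¹ i) : ℤ) : ℝ), fun i => ?_, fun i => ?_⟩
    · rcases Int.units_eq_one_or (g.sign (g.perm⁻¹ i)) with h | h <;> simp only [h] <;> simp
    · simp [SignedPerm.smul_apply, Units.smul_def]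

lemma act_toMatrix (g : SignedPerm (Fin 3)) (x : Fin 3 → ℝ) :
    act (toMatrix ℝ g) (WithLp.toLp 2 x) = WithLp.toLp 2 (g • x) := by
  rw [act, toMatrix_mulVec]

lemma image_V_toMatrix (g : SignedPerm (Fin 3)) : act (toMatrix ℝ g) '' V = V := by
  rw [V_eq_range, ← Set.range_comp]
  have hcomm : act (toMatrix ℝ g) ∘ (fun h : SignedPerm (Fin 3) => WithLp.toLp 2 (h • base)) =
      (fun h => WithLp.toLp 2 (h • base)) ∘ (g * ·) := by
    funext h
    simp only [Function.comp_apply, act_toMatrix, mul_smul]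
  rw [hcomm, (Group.mulLeft_bijective g).surjective.range_comp]

def triangle : Fin 3 → SignedPerm (Fin 3) := ![1, ⟨Equiv.swap 1 2, 1⟩, ⟨Equiv.swap 0 2, 1⟩]

/-- `|v|² - 2` for every vertex `v`: vertices `v`, `w` are joined by an edge (of length 2)
iff `v ⬝ᵥ w = 3 + 2√2`. -/
def edgeDot : ℤ√2 := ⟨3, 2⟩

lemma triangle_adjacent : ∀ i j, i ≠ j → triangle i • baseZ ⬝ᵥ triangle j • baseZ = edgeDot := by
  decide

-- `triangle` is the only triangle of edges through `(1, 1, 1 + √2)`.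
set_option maxRecDepth 10000 in
lemma exists_triangle_of_adjacent_baseZ : ∀ g₁ g₂ : SignedPerm (Fin 3),
    baseZ ⬝ᵥ g₁ • baseZ = edgeDot → baseZ ⬝ᵥ g₂ • baseZ = edgeDot →
    g₁ • baseZ ⬝ᵥ g₂ • baseZ = edgeDot →
    ∃ g : SignedPerm (Fin 3), ∀ i, ![1, g₁, g₂] i • baseZ = (g * triangle i) • baseZ := by
  decide

lemma exists_triangle_of_adjacent (g : Fin 3 → SignedPerm (Fin 3))
    (hg : ∀ i j, i ≠ j → g i • baseZ ⬝ᵥ g j • baseZ = edgeDot) :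
    ∃ k : SignedPerm (Fin 3), ∀ i, g i • baseZ = (k * triangle i) • baseZ := by
  have hdot (i j : Fin 3) : ((g 0)⁻¹ * g i) • baseZ ⬝ᵥ ((g 0)⁻¹ * g j) • baseZ =
      g i • baseZ ⬝ᵥ g j • baseZ := by
    rw [mul_smul, mul_smul, dotProduct_smul_smul]
  obtain ⟨k, hk⟩ := exists_triangle_of_adjacent_baseZ ((g 0)⁻¹ * g 1) ((g 0)⁻¹ * g 2)
    (by simpa only [inv_mul_cancel, one_smul] using (hdot 0 1).trans (hg 0 1 (by decide)))
    (by simpa only [inv_mul_cancel, one_smul] using (hdot 0 2).trans (hg 0 2 (by decide)))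
    ((hdot 1 2).trans (hg 1 2 (by decide)))
  refine ⟨g 0 * k, fun i => ?_⟩
  have hi : ![1, (g 0)⁻¹ * g 1, (g 0)⁻¹ * g 2] i = (g 0)⁻¹ * g i := by
    fin_cases i <;> simp
  rw [← mul_inv_cancel_left (g 0) (g i), mul_smul, ← hi, hk, ← mul_smul, mul_assoc]

lemma dotProduct_mulVec_mulVec_of_mem_orthogonalGroup {ι R : Type*} [Fintype ι] [DecidableEq ι]
    [CommRing R] {A : Matrix ι ι R} (hA : A ∈ orthogonalGroup ι R) (x y : ι → R) :
    A *ᵥ x ⬝ᵥ A *ᵥ y = x ⬝ᵥ y := by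
  rw [dotProduct_mulVec, ← mulVec_transpose, mulVec_mulVec, (mem_orthogonalGroup_iff' ι R).mp hA,
    one_mulVec]

lemma eq_of_forall_mulVec_triangle_eq {A B : Matrix (Fin 3) (Fin 3) ℝ}
    (h : ∀ i, A *ᵥ (triangle i • base) = B *ᵥ (triangle i • base)) : A = B := by
  let T : Matrix (Fin 3) (Fin 3) (ℤ√2) := of fun i => triangle i • baseZ
  have hT : T.det ≠ 0 := by decide
  have hunit : IsUnit (T.map zsqrtTwoToReal)ᵀ := by
    rw [isUnit_iff_isUnit_det, det_transpose, ← RingHom.mapMatrix_apply, ← RingHom.map_det,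
      isUnit_iff_ne_zero, map_ne_zero_iff _ zsqrtTwoToReal_injective]
    exact hT
  refine hunit.mul_right_cancel (ext fun j i => ?_)
  have := congrFun (h i) j
  simpa [mul_apply, mulVec, dotProduct, T, smul_base] using this

theorem exists_eq_toMatrix_of_image_V_eq {A : Matrix (Fin 3) (Fin 3) ℝ}
    (hA : A ∈ orthogonalGroup (Fin 3) ℝ) (hV : act A '' V = V) :
    ∃ g : SignedPerm (Fin 3), A = toMatrix ℝ g := by
  have hmem (i : Fin 3) : ∃ g : SignedPerm (Fin 3), A *ᵥ (triangle i • base) = g • base := by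
    have hi : act A (WithLp.toLp 2 (triangle i • base)) ∈ V :=
      hV ▸ Set.mem_image_of_mem _ (V_eq_range ▸ ⟨triangle i, rfl⟩)
    rw [V_eq_range] at hi
    obtain ⟨g, hg⟩ := hi
    exact ⟨g, congrArg WithLp.ofLp hg.symm⟩
  choose g hg using hmem
  have hadj (i j : Fin 3) (hij : i ≠ j) : g i • baseZ ⬝ᵥ g j • baseZ = edgeDot := by
    apply zsqrtTwoToReal_injective
    rw [← smul_base_dotProduct_smul_base, ← hg, ← hg,
      dotProduct_mulVec_mulVec_of_mem_orthogonalGroup hA, smul_base_dotProduct_smul_base,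
      triangle_adjacent i j hij]
  obtain ⟨k, hk⟩ := exists_triangle_of_adjacent g hadj
  refine ⟨k, eq_of_forall_mulVec_triangle_eq fun i => ?_⟩
  rw [hg, smul_base, hk, ← smul_base, mul_smul, toMatrix_mulVec]

lemma rotGroup_V_eq_map : rotGroup V = det.ker.map (toOrthogonal ℝ) := by
  ext A
  constructor
  · rintro ⟨hdet, hV⟩
    obtain ⟨g, hg⟩ := exists_eq_toMatrix_of_image_V_eq A.2 hV
    have hg1 : ((det g : ℤ) : ℝ) = 1 := by rw [← det_toMatrix, ← hg, hdet]
    exact ⟨g, Units.val_eq_one.mp (by exact_mod_cast hg1), Subtype.ext hg.symm⟩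
  · rintro ⟨g, hg, rfl⟩
    exact ⟨by simp [toOrthogonal, det_toMatrix, MonoidHom.mem_ker.mp hg], image_V_toMatrix g⟩

namespace SignedPerm

/-- The body diagonal of the cube `[-1, 1]³` through the vertex `w`, recorded as the pair
`(x, y)` for which it passes through `(1, x, y)`. -/
def diagonalOf (w : Fin 3 → ℤˣ) : ℤˣ × ℤˣ := (w 0 * w 1, w 0 * w 2)

lemma diagonalOf_units_smul (c : ℤˣ) (w : Fin 3 → ℤˣ) : diagonalOf (c • w) = diagonalOf w := by
  simp [diagonalOf, mul_mul_mul_comm c, Int.units_mul_self]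

lemma vertex_diagonalOf (w : Fin 3 → ℤˣ) :
    ![1, (diagonalOf w).1, (diagonalOf w).2] = w 0 • w := by
  funext j
  fin_cases j <;> simp [diagonalOf, Int.units_mul_self]

def smulDiagonal (g : SignedPerm (Fin 3)) (d : ℤˣ × ℤˣ) : ℤˣ × ℤˣ :=
  diagonalOf (g • ![1, d.1, d.2])

lemma smulDiagonal_one (d : ℤˣ × ℤˣ) : smulDiagonal 1 d = d := by
  simp [smulDiagonal, diagonalOf]

lemma smulDiagonal_mul (g h : SignedPerm (Fin 3)) (d : ℤˣ × ℤˣ) :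
    smulDiagonal (g * h) d = smulDiagonal g (smulDiagonal h d) := by
  rw [smulDiagonal, smulDiagonal, smulDiagonal, vertex_diagonalOf, smul_units_smul,
    diagonalOf_units_smul, mul_smul]

def toPermDiagonals : SignedPerm (Fin 3) →* Equiv.Perm (ℤˣ × ℤˣ) where
  toFun g :=
    { toFun := smulDiagonal g
      invFun := smulDiagonal g⁻¹
      left_inv d := by rw [← smulDiagonal_mul, inv_mul_cancel, smulDiagonal_one]
      right_inv d := by rw [← smulDiagonal_mul, mul_inv_cancel, smulDiagonal_one] }
  map_one' := Equiv.ext smulDiagonal_one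
  map_mul' g h := Equiv.ext (smulDiagonal_mul g h)

lemma eq_one_of_det_eq_one_of_smulDiagonal_eq : ∀ g : SignedPerm (Fin 3),
    det g = 1 → (∀ d, smulDiagonal g d = d) → g = 1 := by
  decide

lemma exists_det_eq_one_smulDiagonal_eq : ∀ σ : Equiv.Perm (ℤˣ × ℤˣ),
    ∃ g : SignedPerm (Fin 3), det g = 1 ∧ ∀ d, smulDiagonal g d = σ d := by
  decide

lemma bijective_toPermDiagonals_comp_subtype :
    Function.Bijective (toPermDiagonals.comp det.ker.subtype) := by
  constructor
  · rw [injective_iff_map_eq_one]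
    rintro ⟨g, hg⟩ h
    exact Subtype.ext (eq_one_of_det_eq_one_of_smulDiagonal_eq g hg (Equiv.ext_iff.mp h))
  · intro σ
    obtain ⟨g, hg, hσ⟩ := exists_det_eq_one_smulDiagonal_eq σ
    exact ⟨⟨g, hg⟩, Equiv.ext hσ⟩

end SignedPerm

/-- The rotation symmetry group of the rhombicuboctahedron is isomorphic to the
symmetric group on 4 letters. -/
theorem rhombicuboctahedron_rotation_group_iso_symm_group :
    Nonempty ((rotGroup V) ≃* Equiv.Perm (Fin 4)) :=
  ⟨(MulEquiv.subgroupCongr rotGroup_V_eq_map).trans <|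
    (Subgroup.equivMapOfInjective _ _ toOrthogonal_injective).symm.trans <|
    (MulEquiv.ofBijective _ bijective_toPermDiagonals_comp_subtype).trans <|
    Equiv.permCongrHom (Fintype.equivFinOfCardEq (by simp : Fintype.card (ℤˣ × ℤˣ) = 4))⟩
end

section
/- The full symmetry group of the pseudo-rhombicuboctahedron has order 16: the set of matrices A in O(3) satisfying A(V') = V' has exactly 16 elements. -/
noncomputable def pt (a b c : ℝ) : EuclideanSpace ℝ (Fin 3) := WithLp.toLp 2 ![a, b, c]

/-- The four top-cupola vertices `(±1, ±1, 1 + √2)` of the rhombicuboctahedron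
that get replaced. -/
noncomputable def Vtop : Set (EuclideanSpace ℝ (Fin 3)) :=
  {pt 1 1 (1 + Real.sqrt 2), pt 1 (-1) (1 + Real.sqrt 2),
   pt (-1) 1 (1 + Real.sqrt 2), pt (-1) (-1) (1 + Real.sqrt 2)}

/-- The four new top vertices `(±√2, 0, 1 + √2)` and `(0, ±√2, 1 + √2)`
(the top square cupola rotated by 45° about the z-axis). -/
noncomputable def Vnew : Set (EuclideanSpace ℝ (Fin 3)) :=
  {pt (Real.sqrt 2) 0 (1 + Real.sqrt 2), pt (-Real.sqrt 2) 0 (1 + Real.sqrt 2),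
   pt 0 (Real.sqrt 2) (1 + Real.sqrt 2), pt 0 (-Real.sqrt 2) (1 + Real.sqrt 2)}

/-- The vertex set of the pseudo-rhombicuboctahedron (elongated square gyrobicupola)
with edge length 2. -/
noncomputable def V' : Set (EuclideanSpace ℝ (Fin 3)) := (V \ Vtop) ∪ Vnew

/-!
Every vertex of `V'` except the eight vertices of the two square faces `z = ±(1 + √2)` has its
antipode in `V'`, so a linear symmetry permutes these eight. The images of `(±√2, 0, 1 + √2)` are
two of them with the same inner product as the originals, which forces them to be `(x, y, z)` and
`(-x, -y, z)`; this fixes the first and last columns of the matrix, and orthogonality leaves two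
choices for the middle one. Conversely each of the `8 · 2` matrices so obtained is a symmetry.
The finite verifications are computations in `ℤ√2`.
-/

open Matrix Zsqrtd

section ZAxial

variable {R : Type*}

def zAxialMatrix [Ring R] (a b c ε : R) : Matrix (Fin 3) (Fin 3) R :=
  !![a, -(ε * b), 0; b, ε * a, 0; 0, 0, c]

theorem zAxialMatrix_map {S : Type*} [Ring R] [Ring S] (f : R →+* S) (a b c ε : R) :
    (zAxialMatrix a b c ε).map f = zAxialMatrix (f a) (f b) (f c) (f ε) := by
  ext i j; fin_cases i <;> fin_cases j <;> simp [zAxialMatrix]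

theorem smul_zAxialMatrix [CommRing R] (r a b c ε : R) :
    r • zAxialMatrix a b c ε = zAxialMatrix (r * a) (r * b) (r * c) ε := by
  ext i j; fin_cases i <;> fin_cases j <;> simp [zAxialMatrix] <;> ring

end ZAxial

theorem eq_neg_and_eq_or_eq_and_eq_neg_of_orthonormal {a b c d : ℝ} (hab : a ^ 2 + b ^ 2 = 1)
    (hcd : c ^ 2 + d ^ 2 = 1) (horth : a * c + b * d = 0) :
    (c = -b ∧ d = a) ∨ (c = b ∧ d = -a) := by
  set k := a * d - b * c
  have hk : (k - 1) * (k + 1) = 0 := by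
    linear_combination (c ^ 2 + d ^ 2) * hab + hcd - (a * c + b * d) * horth
  have hc : c = -(b * k) := by linear_combination (-c) * hab + a * horth
  have hd : d = a * k := by linear_combination (-d) * hab + b * horth
  rcases mul_eq_zero.mp hk with h | h
  · left; constructor <;> [rw [hc]; rw [hd]] <;> rw [show k = 1 by linarith] <;> ring
  · right; constructor <;> [rw [hc]; rw [hd]] <;> rw [show k = -1 by linarith] <;> ring

namespace Matrix

theorem mulVec_dotProduct_mulVec_of_transpose_mul_self {n : Type*} [Fintype n] [DecidableEq n]
    {A : Matrix n n ℝ} (hA : Aᵀ * A = 1) (x y : n → ℝ) : (A *ᵥ x) ⬝ᵥ (A *ᵥ y) = x ⬝ᵥ y := by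
  rw [← dotProduct_transpose_mulVec, mulVec_mulVec, hA, one_mulVec, dotProduct_comm]

theorem eq_zAxialMatrix_of_mem_orthogonalGroup {A : Matrix (Fin 3) (Fin 3) ℝ}
    (hA : A ∈ orthogonalGroup (Fin 3) ℝ) (h20 : A 2 0 = 0) (h02 : A 0 2 = 0) (h12 : A 1 2 = 0) :
    A = zAxialMatrix (A 0 0) (A 1 0) (A 2 2) 1 ∨
      A = zAxialMatrix (A 0 0) (A 1 0) (A 2 2) (-1) := by
  have hcols : ∀ j k, A 0 j * A 0 k + A 1 j * A 1 k + A 2 j * A 2 k = if j = k then 1 else 0 :=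
    fun j k => by
      simpa [mul_apply, Fin.sum_univ_three, one_apply] using
        congrFun (congrFun ((mem_orthogonalGroup_iff' _ _).mp hA) j) k
  have hrows : ∀ i k, A i 0 * A k 0 + A i 1 * A k 1 + A i 2 * A k 2 = if i = k then 1 else 0 :=
    fun i k => by
      simpa [mul_apply, Fin.sum_univ_three, one_apply] using
        congrFun (congrFun ((mem_orthogonalGroup_iff _ _).mp hA) i) k
  have h00 := hcols 0 0
  have h01 := hcols 0 1
  have h11 := hcols 1 1
  have h22 := hcols 2 2
  have r22 := hrows 2 2
  simp only [Fin.isValue, reduceIte, Fin.reduceEq] at h00 h01 h11 h22 r22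
  rw [h20] at h00 h01 r22
  rw [h02, h12] at h22
  have h21 : A 2 1 = 0 := by nlinarith
  rw [h21] at h11
  rcases eq_neg_and_eq_or_eq_and_eq_neg_of_orthonormal (a := A 0 0) (b := A 1 0) (c := A 0 1)
      (d := A 1 1) (by linarith) (by linarith) (by linarith) with ⟨h01, h11⟩ | ⟨h01, h11⟩
  · left
    ext i j; fin_cases i <;> fin_cases j <;> simp [zAxialMatrix, *]
  · right
    ext i j; fin_cases i <;> fin_cases j <;> simp [zAxialMatrix, *]

theorem entries_of_mulVec_mirror_pair {A : Matrix (Fin 3) (Fin 3) ℝ} {s t x y z : ℝ}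
    (hs : s ≠ 0) (ht : t ≠ 0)
    (h₁ : A *ᵥ ![s, 0, t] = ![x, y, z]) (h₂ : A *ᵥ ![-s, 0, t] = ![-x, -y, z]) :
    A 0 0 * s = x ∧ A 1 0 * s = y ∧ A 2 0 = 0 ∧ A 0 2 = 0 ∧ A 1 2 = 0 ∧ A 2 2 * t = z := by
  have row (i : Fin 3) :
      A i 0 * s + A i 2 * t = ![x, y, z] i ∧ -(A i 0 * s) + A i 2 * t = ![-x, -y, z] i := by
    constructor
    · simpa [mulVec, dotProduct, Fin.sum_univ_three] using congrFun h₁ i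
    · simpa [mulVec, dotProduct, Fin.sum_univ_three] using congrFun h₂ i
  obtain ⟨r0, r0'⟩ := row 0
  obtain ⟨r1, r1'⟩ := row 1
  obtain ⟨r2, r2'⟩ := row 2
  simp only [cons_val_zero, cons_val_one, cons_val_two, Nat.succ_eq_add_one, Nat.reduceAdd,
    head_cons, tail_cons] at r0 r0' r1 r1' r2 r2'
  refine ⟨by linarith, by linarith, ?_, ?_, ?_, by linarith⟩
  · exact (mul_eq_zero.mp (by linarith : A 2 0 * s = 0)).resolve_right hs
  · exact (mul_eq_zero.mp (by linarith : A 0 2 * t = 0)).resolve_right ht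
  · exact (mul_eq_zero.mp (by linarith : A 1 2 * t = 0)).resolve_right ht

end Matrix

theorem neg_apply_notMem_of_image_eq {E : Type*} [InvolutiveNeg E] {f : E → E}
    (hf : Function.Injective f) (hneg : ∀ v, f (-v) = -f v) {S : Set E} (hS : f '' S = S)
    {v : E} (hv : -v ∉ S) : -f v ∉ S := by
  rw [← hS]
  rintro ⟨u, hu, hfu⟩
  rw [← hneg, hf.eq_iff] at hfu
  exact hv (hfu ▸ neg_neg u ▸ hu)

section Act

variable {A : Matrix (Fin 3) (Fin 3) ℝ}

theorem act_neg (v : EuclideanSpace ℝ (Fin 3)) : act A (-v) = -act A v := by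
  simp [act, mulVec_neg]

theorem act_act_of_mul_eq_one {B : Matrix (Fin 3) (Fin 3) ℝ} (h : A * B = 1)
    (v : EuclideanSpace ℝ (Fin 3)) : act A (act B v) = v := by
  simp [act, mulVec_mulVec, h]

theorem act_injective (hA : A ∈ orthogonalGroup (Fin 3) ℝ) : Function.Injective (act A) :=
  Function.LeftInverse.injective (g := act Aᵀ)
    (act_act_of_mul_eq_one ((mem_orthogonalGroup_iff' _ _).mp hA))

theorem act_image_eq_of_mapsTo {S : Set (EuclideanSpace ℝ (Fin 3))} (hA : A * Aᵀ = 1)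
    (h : Set.MapsTo (act A) S S) (hT : Set.MapsTo (act Aᵀ) S S) : act A '' S = S :=
  h.image_subset.antisymm fun v hv => ⟨act Aᵀ v, hT hv, act_act_of_mul_eq_one hA v⟩

end Act

namespace PseudoRhombicuboctahedron

noncomputable def toReal : ℤ√2 →+* ℝ := lift ⟨√2, Real.mul_self_sqrt zero_le_two⟩

@[simp]
theorem toReal_sqrtd : toReal sqrtd = √2 := by simp [toReal]

theorem toReal_injective : Function.Injective toReal := by
  refine lift_injective _ fun n hn => ?_
  have : n.natAbs * n.natAbs = 2 := by zify; simpa using hn.symm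
  have : n.natAbs ≤ 2 := by nlinarith
  interval_cases h : n.natAbs <;> omega

noncomputable def embed (v : Fin 3 → ℤ√2) : EuclideanSpace ℝ (Fin 3) :=
  WithLp.toLp 2 (toReal ∘ v)

theorem embed_injective : Function.Injective embed := fun _ _ h =>
  funext fun i => toReal_injective (congrFun (congrArg WithLp.ofLp h) i)

theorem embed_neg (v : Fin 3 → ℤ√2) : embed (-v) = -embed v := by
  ext i; simp [embed]

theorem embed_vecCons (a b c : ℤ√2) :
    embed ![a, b, c] = pt (toReal a) (toReal b) (toReal c) := by
  ext i; fin_cases i <;> rfl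

/-- Entries `±√2/2` do not lie in `ℤ√2`, so symmetries are represented by twice their matrix. -/
noncomputable def halfMap (N : Matrix (Fin 3) (Fin 3) (ℤ√2)) : Matrix (Fin 3) (Fin 3) ℝ :=
  (2⁻¹ : ℝ) • N.map toReal

theorem halfMap_injective : Function.Injective halfMap := fun _ _ h =>
  Matrix.ext fun i j => toReal_injective <| by
    simpa [halfMap] using congrFun (congrFun h i) j

theorem halfMap_transpose (N : Matrix (Fin 3) (Fin 3) (ℤ√2)) : (halfMap N)ᵀ = halfMap Nᵀ := by
  simp [halfMap, transpose_map]

theorem halfMap_mul_transpose {N : Matrix (Fin 3) (Fin 3) (ℤ√2)} (h : N * Nᵀ = 4) :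
    halfMap N * (halfMap N)ᵀ = 1 := by
  rw [halfMap_transpose, halfMap, halfMap, smul_mul_smul_comm, ← Matrix.map_mul, h]
  ext i j
  rcases eq_or_ne i j with rfl | hij <;> norm_num [one_apply, ofNat_apply, map_ofNat, *]

theorem act_halfMap {N : Matrix (Fin 3) (Fin 3) (ℤ√2)} {v w : Fin 3 → ℤ√2}
    (h : N *ᵥ v = 2 • w) : act (halfMap N) (embed v) = embed w := by
  ext i
  have := congrArg toReal (congrFun h i)
  rw [RingHom.map_mulVec] at this
  simp [act, halfMap, embed, Matrix.smul_mulVec, this, map_ofNat]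

def baseVector : Fin 3 → ℤ√2 := ![1, 1, 1 + sqrtd]

def rhombicuboctahedron : Finset (Fin 3 → ℤ√2) :=
  (Finset.univ : Finset (Equiv.Perm (Fin 3) × (Fin 3 → Bool))).image
    fun x i => (if x.2 i then 1 else -1) * baseVector (x.1 i)

def oldTop : Finset (Fin 3 → ℤ√2) :=
  {![1, 1, 1 + sqrtd], ![1, -1, 1 + sqrtd], ![-1, 1, 1 + sqrtd], ![-1, -1, 1 + sqrtd]}

def newTop : Finset (Fin 3 → ℤ√2) :=
  {![sqrtd, 0, 1 + sqrtd], ![-sqrtd, 0, 1 + sqrtd], ![0, sqrtd, 1 + sqrtd],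
    ![0, -sqrtd, 1 + sqrtd]}

def vertices : Finset (Fin 3 → ℤ√2) := rhombicuboctahedron \ oldTop ∪ newTop

theorem toReal_baseVector (j : Fin 3) : toReal (baseVector j) = base j := by
  fin_cases j <;> simp [baseVector, base]

theorem V_eq : V = embed '' rhombicuboctahedron := by
  ext v
  simp only [V, rhombicuboctahedron, Finset.coe_image, Finset.coe_univ, Set.image_univ,
    ← Set.range_comp, Set.mem_range, Set.mem_ofPred_eq, Prod.exists]
  constructor
  · rintro ⟨σ, ε, hε, hv⟩
    refine ⟨σ, fun i => ε i = 1, ?_⟩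
    ext i
    rcases hε i with h | h <;> norm_num [embed, hv, h, toReal_baseVector]
  · rintro ⟨σ, b, rfl⟩
    refine ⟨σ, fun i => if b i then 1 else -1, fun i => by cases h : b i <;> simp [h], fun i => ?_⟩
    simp [embed, apply_ite toReal, toReal_baseVector]

theorem V'_eq : V' = embed '' vertices := by
  have hold : Vtop = embed '' oldTop := by
    simp [Vtop, oldTop, Set.image_insert_eq, embed_vecCons]
  have hnew : Vnew = embed '' newTop := by
    simp [Vnew, newTop, Set.image_insert_eq, embed_vecCons]
  rw [V', vertices, V_eq, hold, hnew, Finset.coe_union, Finset.coe_sdiff,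
    Set.image_union, Set.image_sdiff embed_injective]

def unpaired : Finset (Fin 3 → ℤ√2) := vertices.filter fun v => -v ∉ vertices

def doubledSymmetry (x : (Fin 3 → ℤ√2) × ℤ√2) : Matrix (Fin 3) (Fin 3) (ℤ√2) :=
  zAxialMatrix (sqrtd * x.1 0) (sqrtd * x.1 1) (2 * (sqrtd - 1) * x.1 2) x.2

def parameters : Finset ((Fin 3 → ℤ√2) × ℤ√2) := unpaired ×ˢ {1, -1}

theorem card_parameters : parameters.card = 16 := by decide +kernel

theorem doubledSymmetry_mul_transpose :
    ∀ x ∈ parameters, doubledSymmetry x * (doubledSymmetry x)ᵀ = 4 := by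
  decide +kernel

theorem doubledSymmetry_mapsTo :
    ∀ x ∈ parameters, ∀ v ∈ vertices, ∃ w ∈ vertices, doubledSymmetry x *ᵥ v = 2 • w := by
  decide +kernel

theorem transpose_doubledSymmetry_mapsTo :
    ∀ x ∈ parameters, ∀ v ∈ vertices, ∃ w ∈ vertices, (doubledSymmetry x)ᵀ *ᵥ v = 2 • w := by
  decide +kernel

theorem doubledSymmetry_injOn :
    ∀ x ∈ parameters, ∀ y ∈ parameters, doubledSymmetry x = doubledSymmetry y → x = y := by
  decide +kernel

theorem mirror_pair_mem_unpaired :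
    ![sqrtd, 0, 1 + sqrtd] ∈ unpaired ∧ ![-sqrtd, 0, 1 + sqrtd] ∈ unpaired := by
  decide +kernel

theorem eq_of_mem_unpaired_of_dotProduct_eq :
    ∀ w ∈ unpaired, ∀ w' ∈ unpaired,
      w ⬝ᵥ w' = ![sqrtd, 0, 1 + sqrtd] ⬝ᵥ ![-sqrtd, 0, 1 + sqrtd] → w' = ![-w 0, -w 1, w 2] := by
  decide +kernel

theorem halfMap_doubledSymmetry (w : Fin 3 → ℤ√2) (ε : ℤ√2) :
    halfMap (doubledSymmetry (w, ε)) =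
      zAxialMatrix (toReal (w 0) / √2) (toReal (w 1) / √2) (toReal (w 2) / (1 + √2))
        (toReal ε) := by
  have h2 : √2 ^ 2 = 2 := Real.sq_sqrt zero_le_two
  have hpos : 0 < 1 + √2 := by positivity
  rw [halfMap, doubledSymmetry, zAxialMatrix_map, smul_zAxialMatrix]
  congr 1 <;> simp only [map_mul, map_sub, map_ofNat, map_one, toReal_sqrtd] <;> field_simp
  · linear_combination (toReal (w 0)) * h2
  · linear_combination (toReal (w 1)) * h2
  · linear_combination (toReal (w 2)) * h2

theorem mapsTo_act_halfMap {N : Matrix (Fin 3) (Fin 3) (ℤ√2)}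
    (hN : ∀ v ∈ vertices, ∃ w ∈ vertices, N *ᵥ v = 2 • w) :
    Set.MapsTo (act (halfMap N)) V' V' := by
  rw [V'_eq]
  rintro _ ⟨v, hv, rfl⟩
  obtain ⟨w, hw, h⟩ := hN v hv
  exact ⟨w, hw, (act_halfMap h).symm⟩

theorem halfMap_doubledSymmetry_mem {x : (Fin 3 → ℤ√2) × ℤ√2} (hx : x ∈ parameters) :
    halfMap (doubledSymmetry x) ∈ orthogonalGroup (Fin 3) ℝ ∧
      act (halfMap (doubledSymmetry x)) '' V' = V' := by
  have horth := halfMap_mul_transpose (doubledSymmetry_mul_transpose x hx)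
  refine ⟨(mem_orthogonalGroup_iff _ _).mpr horth, act_image_eq_of_mapsTo horth
    (mapsTo_act_halfMap (doubledSymmetry_mapsTo x hx)) ?_⟩
  rw [halfMap_transpose]
  exact mapsTo_act_halfMap (transpose_doubledSymmetry_mapsTo x hx)

section Symmetry

variable {A : Matrix (Fin 3) (Fin 3) ℝ}

theorem exists_mem_unpaired_act_eq (hA : A ∈ orthogonalGroup (Fin 3) ℝ) (hV : act A '' V' = V')
    {v : Fin 3 → ℤ√2} (hv : v ∈ unpaired) : ∃ w ∈ unpaired, act A (embed v) = embed w := by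
  simp only [unpaired, Finset.mem_filter] at hv ⊢
  have hmem : act A (embed v) ∈ V' := hV ▸ Set.mem_image_of_mem _ (V'_eq ▸ ⟨v, hv.1, rfl⟩)
  rw [V'_eq] at hmem
  obtain ⟨w, hw, hwv⟩ := hmem
  refine ⟨w, ⟨hw, fun hw' => ?_⟩, hwv.symm⟩
  have hv' : -embed v ∉ V' := by
    rw [V'_eq, ← embed_neg, embed_injective.mem_set_image]
    exact hv.2
  refine neg_apply_notMem_of_image_eq (act_injective hA) act_neg hV hv' ?_
  rw [← hwv, ← embed_neg, V'_eq]
  exact ⟨-w, hw', rfl⟩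

theorem exists_eq_halfMap_doubledSymmetry (hA : A ∈ orthogonalGroup (Fin 3) ℝ)
    (hV : act A '' V' = V') : ∃ x ∈ parameters, halfMap (doubledSymmetry x) = A := by
  obtain ⟨w, hw, h₁⟩ := exists_mem_unpaired_act_eq hA hV mirror_pair_mem_unpaired.1
  obtain ⟨w', hw', h₂⟩ := exists_mem_unpaired_act_eq hA hV mirror_pair_mem_unpaired.2
  replace h₁ : A *ᵥ (toReal ∘ _) = toReal ∘ w := congrArg WithLp.ofLp h₁
  replace h₂ : A *ᵥ (toReal ∘ _) = toReal ∘ w' := congrArg WithLp.ofLp h₂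
  obtain rfl : w' = ![-w 0, -w 1, w 2] := by
    refine eq_of_mem_unpaired_of_dotProduct_eq w hw w' hw' (toReal_injective ?_)
    rw [RingHom.map_dotProduct, RingHom.map_dotProduct, ← h₁, ← h₂,
      mulVec_dotProduct_mulVec_of_transpose_mul_self ((mem_orthogonalGroup_iff' _ _).mp hA)]
  have hs : √2 ≠ 0 := by positivity
  have ht : 1 + √2 ≠ 0 := by positivity
  obtain ⟨h00, h10, h20, h02, h12, h22⟩ := entries_of_mulVec_mirror_pair (x := toReal (w 0))
    (y := toReal (w 1)) (z := toReal (w 2)) hs ht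
    (by convert h₁ using 2 <;> ext i <;> fin_cases i <;> simp)
    (by convert h₂ using 2 <;> ext i <;> fin_cases i <;> simp)
  have hAw (ε : ℤ√2) :
      halfMap (doubledSymmetry (w, ε)) = zAxialMatrix (A 0 0) (A 1 0) (A 2 2) (toReal ε) := by
    rw [halfMap_doubledSymmetry, ← eq_div_of_mul_eq hs h00, ← eq_div_of_mul_eq hs h10,
      ← eq_div_of_mul_eq ht h22]
  rcases eq_zAxialMatrix_of_mem_orthogonalGroup hA h20 h02 h12 with h | h
  · exact ⟨(w, 1), Finset.mem_product.mpr ⟨hw, by simp⟩, by rw [hAw, map_one]; exact h.symm⟩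
  · exact ⟨(w, -1), Finset.mem_product.mpr ⟨hw, by simp⟩,
      by rw [hAw, map_neg, map_one]; exact h.symm⟩

end Symmetry

end PseudoRhombicuboctahedron

open PseudoRhombicuboctahedron

/-- The full symmetry group of the pseudo-rhombicuboctahedron has order 16:
there are exactly 16 matrices `A` in O(3) with `A(V') = V'`. -/
theorem pseudoRhombicuboctahedron_full_symmetry_group_card :
    {A : Matrix (Fin 3) (Fin 3) ℝ | A ∈ Matrix.orthogonalGroup (Fin 3) ℝ ∧
      act A '' V' = V'}.ncard = 16 := by
  have hG : {A : Matrix (Fin 3) (Fin 3) ℝ | A ∈ Matrix.orthogonalGroup (Fin 3) ℝ ∧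
      act A '' V' = V'} = (halfMap ∘ doubledSymmetry) '' parameters := by
    ext A
    constructor
    · rintro ⟨hA, hV⟩
      exact exists_eq_halfMap_doubledSymmetry hA hV
    · rintro ⟨x, hx, rfl⟩
      exact halfMap_doubledSymmetry_mem hx
  rw [hG, Set.InjOn.ncard_image, Set.ncard_coe_finset, card_parameters]
  exact fun x hx y hy h => doubledSymmetry_injOn x hx y hy (halfMap_injective h)
end
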